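/- For every θ > 0 and every n ≥ 1, the internal path length I_n^{(θ)} of a Hoppe tree with n nodes and parameter θ has expectation E[I_n^{(θ)}] = (θ + n − 1) · Σ_{i=1}^{n−1} 1/(θ + i). -/

import Mathlib

open MeasureTheory ProbabilityTheory Real Filter Topology

noncomputable section

/-- Depth of node `i` in the Hoppe tree grown from the parent choices `U`:
`U k ω` is the parent of node `k + 2` (a node in `{1, …, k + 1}`, almost surely);
node `1` is the root. The `min` clipping is irrelevant almost surely. -/
def hoppeDepth {Ω : Type*} (U : ℕ → Ω → ℕ) (ω : Ω) : ℕ → ℕ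
  | 0 => 0
  | 1 => 0
  | n + 2 => hoppeDepth U ω (min (U n ω) (n + 1)) + 1
  decreasing_by omega

/-- The parent choices of a Hoppe tree with parameter `θ`: `U k` is the (random) parent
of node `k + 2`, the choices being independent, node `k + 2` choosing its parent among
nodes `1, …, k + 1`, namely the root `1` with probability `θ / (θ + k)` and each other
node with probability `1 / (θ + k)`. -/
structure IsHoppeParents {Ω : Type*} [MeasurableSpace Ω] (θ : ℝ) (μ : Measure Ω)
    (U : ℕ → Ω → ℕ) : Prop where
  meas : ∀ k, Measurable (U k)
  indep : iIndepFun U μ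
  root : ∀ k : ℕ, μ {ω | U k ω = 1} = ENNReal.ofReal (θ / (θ + k))
  nonroot : ∀ k j : ℕ, 2 ≤ j → j ≤ k + 1 → μ {ω | U k ω = j} = ENNReal.ofReal (1 / (θ + k))
  range : ∀ k : ℕ, μ {ω | 1 ≤ U k ω ∧ U k ω ≤ k + 1} = 1

/-- Height of the Hoppe tree with `n` nodes: maximal depth over nodes `1, …, n`. -/
def hoppeHeight {Ω : Type*} (U : ℕ → Ω → ℕ) (ω : Ω) (n : ℕ) : ℕ :=
  (Finset.Icc 1 n).sup (fun i => hoppeDepth U ω i)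

/-- Internal path length of the Hoppe tree with `n` nodes: sum of the depths of
nodes `1, …, n`. -/
def hoppePathLength {Ω : Type*} (U : ℕ → Ω → ℕ) (ω : Ω) (n : ℕ) : ℕ :=
  ∑ i ∈ Finset.Icc 1 n, hoppeDepth U ω i

/-- Number of leaves of the Hoppe tree with `n` nodes: nodes `j ∈ {1, …, n}` that are
the parent of no node `k ∈ {2, …, n}`. -/
def hoppeLeafCount {Ω : Type*} (U : ℕ → Ω → ℕ) (ω : Ω) (n : ℕ) : ℕ :=
  (@Finset.filter _ (fun j => ∀ k ∈ Finset.Icc 2 n, U (k - 2) ω ≠ j) (fun _ => by infer_instance)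
    (Finset.Icc 1 n)).card

/-! Conditioning on the parent `U k` of node `k + 2`, which is independent of the tree on the
first `k + 1` nodes, gives `E D_{k+2} = 1 + (E D_2 + ⋯ + E D_{k+1}) / (θ + k)`, the root having
depth `0`. For the partial sums `S_n = E D_1 + ⋯ + E D_n` this reads
`S_{k+2} = 1 + S_{k+1} (θ + k + 1) / (θ + k)`, a recursion solved by
`S_n = (θ + n - 1) ∑_{i=1}^{n-1} 1 / (θ + i)`. -/

section Depth

variable {Ω : Type*} {U : ℕ → Ω → ℕ}

lemma hoppeDepth_congr {Ω' : Type*} {V : ℕ → Ω' → ℕ} {ω : Ω} {ω' : Ω'} (n : ℕ)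
    (h : ∀ i, i + 2 ≤ n → U i ω = V i ω') : hoppeDepth U ω n = hoppeDepth V ω' n := by
  induction n using Nat.strong_induction_on with
  | _ n ih =>
    match n with
    | 0 | 1 => simp [hoppeDepth]
    | n + 2 =>
      rw [hoppeDepth, hoppeDepth, h n le_rfl, ih _ (by omega) fun i hi => h i (by omega)]

lemma hoppeDepth_le (ω : Ω) (n : ℕ) : hoppeDepth U ω n ≤ n := by
  induction n using Nat.strong_induction_on with
  | _ n ih =>
    match n with
    | 0 | 1 => simp [hoppeDepth]
    | n + 2 =>
      have := ih (min (U n ω) (n + 1)) (by omega)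
      rw [hoppeDepth]
      omega

lemma hoppeDepth_eq_comp_restrict {k j : ℕ} (hj : j ≤ k + 1) :
    (fun ω => hoppeDepth U ω j) =
      (fun v : Finset.range k → ℕ =>
          hoppeDepth (fun i v => if h : i ∈ Finset.range k then v ⟨i, h⟩ else 0) v j) ∘
        fun ω => (Finset.range k).restrict fun i => U i ω := by
  funext ω
  exact hoppeDepth_congr j fun i hi => by simp [show i < k by omega]

variable [MeasurableSpace Ω]

lemma measurable_hoppeDepth (hU : ∀ k, Measurable (U k)) (j : ℕ) :
    Measurable fun ω => hoppeDepth U ω j := by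
  rw [hoppeDepth_eq_comp_restrict (k := j) (by omega)]
  exact (measurable_of_countable _).comp (measurable_pi_lambda _ fun i => hU i)

lemma indepFun_hoppeDepth {μ : Measure Ω} (hU : ∀ k, Measurable (U k)) (hind : iIndepFun U μ)
    {k j : ℕ} (hj : j ≤ k + 1) : IndepFun (U k) (fun ω => hoppeDepth U ω j) μ := by
  rw [hoppeDepth_eq_comp_restrict hj]
  exact (hind.indepFun_finset {k} (Finset.range k) (by simp) hU).comp
    (φ := fun v : ({k} : Finset ℕ) → ℕ => v ⟨k, Finset.mem_singleton_self k⟩)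
    (measurable_of_countable _) (measurable_of_countable _)

end Depth

lemma sum_Icc_succ_eq_mul_sum_inv_of_rec {θ : ℝ} (hθ : ∀ k : ℕ, θ + k ≠ 0) {e : ℕ → ℝ}
    (h1 : e 1 = 0) (hrec : ∀ k, e (k + 2) = 1 + (∑ j ∈ Finset.Icc 1 (k + 1), e j) / (θ + k))
    (n : ℕ) : ∑ i ∈ Finset.Icc 1 (n + 1), e i = (θ + n) * ∑ i ∈ Finset.Icc 1 n, 1 / (θ + i) := by
  induction n with
  | zero => simp [h1]
  | succ n ih =>
    have hn := hθ n
    have hn1 := hθ (n + 1)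
    rw [Finset.sum_Icc_succ_top (by omega), ih, hrec n, ih, Finset.sum_Icc_succ_top (by omega)]
    push_cast at hn1 ⊢
    field_simp
    ring

section Expectation

variable {Ω : Type*} [MeasurableSpace Ω] {μ : Measure Ω} {U : ℕ → Ω → ℕ}

lemma integrable_hoppeDepth [IsFiniteMeasure μ] (hU : ∀ k, Measurable (U k)) (j : ℕ) :
    Integrable (fun ω => (hoppeDepth U ω j : ℝ)) μ := by
  refine .of_bound ?_ j (.of_forall fun ω => by simpa using hoppeDepth_le ω j)
  exact ((measurable_of_countable Nat.cast).comp (measurable_hoppeDepth hU j)).aestronglyMeasurable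

/-- First-step analysis: node `k + 2` sits one level below its parent `U k`, which is
independent of the depths of the earlier nodes. -/
lemma integral_hoppeDepth_add_two [IsProbabilityMeasure μ] (hU : ∀ k, Measurable (U k))
    (hind : iIndepFun U μ) {k : ℕ} (hrange : ∀ᵐ ω ∂μ, U k ω ∈ Finset.Icc 1 (k + 1)) :
    ∫ ω, (hoppeDepth U ω (k + 2) : ℝ) ∂μ =
      1 + ∑ j ∈ Finset.Icc 1 (k + 1),
        μ.real {ω | U k ω = j} * ∫ ω, (hoppeDepth U ω j : ℝ) ∂μ := by
  have hset (j : ℕ) : MeasurableSet {ω | U k ω = j} := hU k (measurableSet_singleton j)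
  have hsplit : (fun ω => (hoppeDepth U ω (k + 2) : ℝ)) =ᵐ[μ] fun ω =>
      1 + ∑ j ∈ Finset.Icc 1 (k + 1),
        {ω | U k ω = j}.indicator (fun ω => (hoppeDepth U ω j : ℝ)) ω := by
    filter_upwards [hrange] with ω hω
    rw [Finset.sum_eq_single_of_mem (U k ω) hω,
      Set.indicator_of_mem (show ω ∈ {ω' | U k ω' = U k ω} from rfl), hoppeDepth,
      min_eq_left (Finset.mem_Icc.1 hω).2]
    · push_cast
      ring
    · exact fun j _ hj =>
        Set.indicator_of_notMem (show ω ∉ {ω' | U k ω' = j} from Ne.symm hj) _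
  have hterm : ∀ j ∈ Finset.Icc 1 (k + 1),
      ∫ ω, {ω | U k ω = j}.indicator (fun ω => (hoppeDepth U ω j : ℝ)) ω ∂μ =
        μ.real {ω | U k ω = j} * ∫ ω, (hoppeDepth U ω j : ℝ) ∂μ := by
    intro j hj
    rw [integral_indicator (hset j)]
    exact Indep.setIntegral_eq_mul (hU k).comap_le
      ((IndepFun_iff_Indep _ _ _).1 (indepFun_hoppeDepth hU hind (Finset.mem_Icc.1 hj).2))
      (measurable_hoppeDepth hU j).aemeasurable ⟨{j}, measurableSet_singleton j, rfl⟩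
      (f := Nat.cast) (measurable_of_countable _).aestronglyMeasurable
  have hint : ∀ j ∈ Finset.Icc 1 (k + 1), Integrable
      ({ω | U k ω = j}.indicator fun ω => (hoppeDepth U ω j : ℝ)) μ :=
    fun j _ => (integrable_hoppeDepth hU j).indicator (hset j)
  rw [integral_congr_ae hsplit, integral_add (integrable_const 1) (integrable_finsetSum _ hint),
    integral_finsetSum _ hint, Finset.sum_congr rfl hterm]
  simp

namespace IsHoppeParents

variable {θ : ℝ} [IsProbabilityMeasure μ]

lemma ae_mem_Icc (hU : IsHoppeParents θ μ U) (k : ℕ) :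
    ∀ᵐ ω ∂μ, U k ω ∈ Finset.Icc 1 (k + 1) := by
  have hmeas : MeasurableSet {ω | U k ω ∈ Finset.Icc 1 (k + 1)} :=
    hU.meas k (Set.to_countable _).measurableSet
  refine (ae_iff_measure_eq hmeas.nullMeasurableSet).2 ?_
  simpa using hU.range k

lemma integral_hoppeDepth_add_two (hθ : 0 < θ) (hU : IsHoppeParents θ μ U) (k : ℕ) :
    ∫ ω, (hoppeDepth U ω (k + 2) : ℝ) ∂μ =
      1 + (∑ j ∈ Finset.Icc 1 (k + 1), ∫ ω, (hoppeDepth U ω j : ℝ) ∂μ) / (θ + k) := by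
  rw [_root_.integral_hoppeDepth_add_two hU.meas hU.indep (hU.ae_mem_Icc k), Finset.sum_div]
  congr 1
  refine Finset.sum_congr rfl fun j hj => ?_
  obtain rfl | hj2 : j = 1 ∨ 2 ≤ j := by grind
  · simp [hoppeDepth]
  · rw [measureReal_def, hU.nonroot k j hj2 (Finset.mem_Icc.1 hj).2,
      ENNReal.toReal_ofReal (by positivity)]
    ring

end IsHoppeParents

end Expectation

/-- Expected internal path length of a Hoppe tree:
`E[I_n] = (θ + n - 1) ∑_{i=1}^{n-1} 1/(θ + i)`. -/
theorem hoppe_path_length_expectation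
    {Ω : Type*} [MeasurableSpace Ω]
    (θ : ℝ) (hθ : 0 < θ)
    (μ : Measure Ω) [IsProbabilityMeasure μ] (U : ℕ → Ω → ℕ) (hU : IsHoppeParents θ μ U) :
    ∀ n : ℕ, 1 ≤ n →
      ∫ ω, (hoppePathLength U ω n : ℝ) ∂μ
        = (θ + (n : ℝ) - 1) * ∑ i ∈ Finset.Icc 1 (n - 1), 1 / (θ + i) := by
  intro n hn
  obtain ⟨m, rfl⟩ := Nat.exists_eq_add_of_le' hn
  have hsum : ∫ ω, (hoppePathLength U ω (m + 1) : ℝ) ∂μ =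
      ∑ i ∈ Finset.Icc 1 (m + 1), ∫ ω, (hoppeDepth U ω i : ℝ) ∂μ := by
    simp only [hoppePathLength, Nat.cast_sum]
    exact integral_finsetSum _ fun i _ => integrable_hoppeDepth hU.meas i
  rw [hsum, sum_Icc_succ_eq_mul_sum_inv_of_rec (fun k => by positivity) (by simp [hoppeDepth])
    (hU.integral_hoppeDepth_add_two hθ) m, Nat.add_sub_cancel]
  push_cast
  ring

end
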